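/- Bailey's second product formula: for x ∈ ℂ and ρ ∈ ℂ such that ρ and 2−ρ are not nonpositive integers, ₀F₁(−; ρ; x) · ₀F₁(−; 2−ρ; −x) = ₀F₃(−; 1/2, (ρ+1)/2, (3−ρ)/2; −x²/4) + (2(1−ρ)x/(ρ(2−ρ))) · ₀F₃(−; 3/2, ρ/2 + 1, 2 − ρ/2; −x²/4). -/

import Mathlib

/-!
Write `a m = x^m / ((ρ)_m m!)` and `b n = (-x)^n / ((2-ρ)_n n!)`. The coefficient
`c N = ∑_{m+n=N} a m b n` of the Cauchy product satisfies the two-term recurrence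
`(N+2)(N+1)(N+1+ρ)(N+3-ρ) c (N+2) = -4 x² c N`, found by creative telescoping from the
first-order recurrences of `a` and `b`. Since `(N+2)(N+1)(N+1+ρ)(N+3-ρ)` is `16` times the
ratio factor of the `₀F₃` terms (with `N = 2M` for the even and `N = 2M+1` for the odd
coefficients), and `c 0 = 1`, `c 1 = 2(1-ρ)x/(ρ(2-ρ))`, the even and odd parts of the product
are the two `₀F₃` series.
-/

noncomputable def poch (a : ℂ) (n : ℕ) : ℂ := (ascPochhammer ℂ n).eval a

open Filter Finset

lemma poch_succ (a : ℂ) (n : ℕ) : poch a (n + 1) = poch a n * (a + n) := by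
  simp [poch, ascPochhammer_succ_right]

/-- Extended by zero to negative indices, so that the recurrences below hold on all of `ℤ`
and the telescoping needs no boundary cases. -/
noncomputable def term01 (c y : ℂ) : ℤ → ℂ
  | (n : ℕ) => y ^ n / (poch c n * n.factorial)
  | Int.negSucc _ => 0

noncomputable def term03 (a b c y : ℂ) (n : ℕ) : ℂ :=
  y ^ n / (poch a n * poch b n * poch c n * n.factorial)

lemma term01_natCast_succ (c y : ℂ) (n : ℕ) :
    term01 c y (n + 1 : ℕ) = y * term01 c y n / ((c + n) * (n + 1)) := by
  simp only [term01, poch_succ, Nat.factorial_succ, pow_succ]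
  push_cast
  simp only [div_eq_mul_inv, mul_inv]
  ring

lemma term03_succ (a b c y : ℂ) (n : ℕ) :
    term03 a b c y (n + 1) = y * term03 a b c y n / ((a + n) * (b + n) * (c + n) * (n + 1)) := by
  simp only [term03, poch_succ, Nat.factorial_succ, pow_succ]
  push_cast
  simp only [div_eq_mul_inv, mul_inv]
  ring

lemma mul_term01_eq_mul_term01_sub_one {c : ℂ} (hc : ∀ k : ℕ, c ≠ -(k : ℂ)) (y : ℂ) (n : ℤ) :
    n * (n + c - 1) * term01 c y n = y * term01 c y (n - 1) := by
  rcases n with (_ | k) | k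
  · simp only [Int.ofNat_eq_natCast, Nat.cast_zero, Int.cast_zero, zero_mul, zero_sub]
    exact (mul_eq_zero_of_right y rfl).symm
  · have hck : c + k ≠ 0 := fun h => hc k (by linear_combination h)
    rw [Int.ofNat_eq_natCast, term01_natCast_succ, show ((k + 1 : ℕ) : ℤ) - 1 = k by omega]
    push_cast
    field_simp
    ring
  · simp [term01]

lemma tendsto_norm_add_natCast_atTop (c : ℂ) : Tendsto (fun n : ℕ => ‖c + n‖) atTop atTop := by
  refine tendsto_atTop_mono (fun n => ?_)
    (tendsto_atTop_add_const_right _ (-‖c‖) tendsto_natCast_atTop_atTop)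
  simpa [add_comm c] using norm_sub_norm_le (n : ℂ) (-c)

lemma summable_norm_of_succ_eq_mul_div {f e : ℕ → ℂ} {y : ℂ}
    (hf : ∀ n, f (n + 1) = y * f n / e n) (he : Tendsto (fun n => ‖e n‖) atTop atTop) :
    Summable fun n => ‖f n‖ := by
  refine summable_of_ratio_norm_eventually_le (r := 1 / 2) (by norm_num) ?_
  filter_upwards [he.eventually_ge_atTop (2 * ‖y‖ + 1)] with n hn
  rw [norm_norm, norm_norm, hf, norm_div, norm_mul, div_le_iff₀ (by linarith [norm_nonneg y])]
  nlinarith [norm_nonneg (f n), norm_nonneg y]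

lemma summable_norm_term01 (c y : ℂ) : Summable fun n : ℕ => ‖term01 c y n‖ := by
  refine summable_norm_of_succ_eq_mul_div (term01_natCast_succ c y) ?_
  refine tendsto_atTop_mono (fun n => ?_) (tendsto_norm_add_natCast_atTop c)
  rw [norm_mul]
  refine le_mul_of_one_le_right (norm_nonneg _) ?_
  rw [← Nat.cast_add_one, Complex.norm_natCast]
  exact_mod_cast Nat.le_add_left 1 n

noncomputable def cauchyCoeff (a b : ℤ → ℂ) (N : ℕ) : ℂ :=
  ∑ m ∈ range (N + 1), a m * b (N - m)

lemma cauchyCoeff_eq_sum_antidiagonal (a b : ℤ → ℂ) (N : ℕ) :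
    cauchyCoeff a b N = ∑ kl ∈ antidiagonal N, a kl.1 * b kl.2 := by
  rw [Nat.sum_antidiagonal_eq_sum_range_succ_mk]
  exact sum_congr rfl fun m hm => by rw [Nat.cast_sub (Nat.le_of_lt_succ (mem_range.1 hm))]

theorem summable_cauchyCoeff {a b : ℤ → ℂ} (ha : Summable fun n : ℕ => ‖a n‖)
    (hb : Summable fun n : ℕ => ‖b n‖) : Summable (cauchyCoeff a b) := by
  simpa only [funext (cauchyCoeff_eq_sum_antidiagonal a b)] using
    (summable_norm_sum_mul_antidiagonal_of_summable_norm ha hb).of_norm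

theorem tsum_mul_tsum_eq_tsum_cauchyCoeff {a b : ℤ → ℂ} (ha : Summable fun n : ℕ => ‖a n‖)
    (hb : Summable fun n : ℕ => ‖b n‖) :
    (∑' n : ℕ, a n) * (∑' n : ℕ, b n) = ∑' N, cauchyCoeff a b N := by
  simpa only [funext (cauchyCoeff_eq_sum_antidiagonal a b)] using
    tsum_mul_tsum_eq_tsum_sum_antidiagonal_of_summable_norm ha hb

section Recurrence

variable {ρ x : ℂ} {a b : ℤ → ℂ}

lemma sum_mul_certificate_eq_zero (ha0 : a (-1) = 0) (hb0 : b (-1) = 0)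
    (ha : ∀ n : ℤ, n * (n + ρ - 1) * a n = x * a (n - 1))
    (hb : ∀ n : ℤ, n * (n + 1 - ρ) * b n = -x * b (n - 1)) (N : ℕ) :
    ∑ m ∈ range (N + 3), a m * b (N + 2 - m) *
      ((N + 2) * (N + 1) * (N + 1 + ρ) * (N + 3 - ρ)
        - 4 * m * (N + 2 - m) * (m + ρ - 1) * (N + 3 - m - ρ)) = 0 := by
  -- Zeilberger's certificate: the summand is `x * (T (m + 1) - T m)`.
  set W : ℂ → ℂ := fun z => 2 * z ^ 2 + (2 * ρ - 2 * N - 8) * z - (N + 3) * ρ - N ^ 2 + 5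
  set T : ℤ → ℂ := fun m => a (m - 1) * b (N + 2 - m) * W m
  have step : ∀ m : ℤ, a m * b (N + 2 - m) *
      ((N + 2) * (N + 1) * (N + 1 + ρ) * (N + 3 - ρ)
        - 4 * m * (N + 2 - m) * (m + ρ - 1) * (N + 3 - m - ρ)) = x * (T (m + 1) - T m) := by
    intro m
    have hm := ha m
    have hNm := hb (N + 2 - m)
    simp only [T, W, add_sub_cancel_right, show (N : ℤ) + 2 - (m + 1) = N + 2 - m - 1 by ring]
    push_cast at hm hNm ⊢
    linear_combination (-(b (N + 2 - m) * W m)) * hm - (a m * W (m + 1)) * hNm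
  calc _ = ∑ m ∈ range (N + 3), x * (T ((m + 1 : ℕ) : ℤ) - T (m : ℕ)) :=
        sum_congr rfl fun m _ => by push_cast; exact step m
    _ = x * (T (N + 3 : ℕ) - T (0 : ℕ)) := by rw [← mul_sum, sum_range_sub (fun i : ℕ => T i)]
    _ = 0 := by simp [T, ha0, show (N : ℤ) + 2 - (N + 3) = -1 by ring, hb0]

lemma sum_mul_weight_eq (ha0 : a (-1) = 0) (hb0 : b (-1) = 0)
    (ha : ∀ n : ℤ, n * (n + ρ - 1) * a n = x * a (n - 1))
    (hb : ∀ n : ℤ, n * (n + 1 - ρ) * b n = -x * b (n - 1)) (N : ℕ) :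
    ∑ m ∈ range (N + 3), a m * b (N + 2 - m) *
      (4 * m * (N + 2 - m) * (m + ρ - 1) * (N + 3 - m - ρ)) = -4 * x ^ 2 * cauchyCoeff a b N := by
  have step : ∀ m : ℤ, a m * b (N + 2 - m) * (4 * m * (N + 2 - m) * (m + ρ - 1) * (N + 3 - m - ρ))
      = -4 * x ^ 2 * (a (m - 1) * b (N + 1 - m)) := by
    intro m
    have hm := ha m
    have hNm := hb (N + 2 - m)
    rw [show (N : ℤ) + 2 - m - 1 = N + 1 - m by ring] at hNm
    push_cast at hm hNm ⊢
    linear_combination (4 * (N + 2 - m) * (N + 3 - m - ρ) * b (N + 2 - m)) * hm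
      + 4 * x * a (m - 1) * hNm
  calc _ = -4 * x ^ 2 * ∑ m ∈ range (N + 3), a ((m : ℤ) - 1) * b (N + 1 - m) := by
        rw [mul_sum]
        exact sum_congr rfl fun m _ => step m
    _ = -4 * x ^ 2 * cauchyCoeff a b N := by
        rw [sum_range_succ, sum_range_succ', cauchyCoeff]
        simp [ha0, hb0, show (N : ℤ) + 1 - (N + 2) = -1 by ring, add_sub_add_right_eq_sub]

theorem cauchyCoeff_add_two (ha0 : a (-1) = 0) (hb0 : b (-1) = 0)
    (ha : ∀ n : ℤ, n * (n + ρ - 1) * a n = x * a (n - 1))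
    (hb : ∀ n : ℤ, n * (n + 1 - ρ) * b n = -x * b (n - 1)) (N : ℕ) :
    (N + 2) * (N + 1) * (N + 1 + ρ) * (N + 3 - ρ) * cauchyCoeff a b (N + 2)
      = -4 * x ^ 2 * cauchyCoeff a b N := by
  rw [← sub_eq_zero, ← sum_mul_certificate_eq_zero ha0 hb0 ha hb N, cauchyCoeff,
    ← sum_mul_weight_eq ha0 hb0 ha hb N, mul_sum, ← sum_sub_distrib]
  push_cast
  exact sum_congr rfl fun m _ => by ring

end Recurrence

section Bailey

variable {ρ : ℂ} (x : ℂ)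

lemma cauchyCoeff_term01_add_two (hρ : ∀ k : ℕ, ρ ≠ -(k : ℂ))
    (hρ' : ∀ k : ℕ, 2 - ρ ≠ -(k : ℂ)) (N : ℕ) :
    cauchyCoeff (term01 ρ x) (term01 (2 - ρ) (-x)) (N + 2)
      = -4 * x ^ 2 * cauchyCoeff (term01 ρ x) (term01 (2 - ρ) (-x)) N
        / ((N + 2) * (N + 1) * (N + 1 + ρ) * (N + 3 - ρ)) := by
  have h2 : (N : ℂ) + 2 ≠ 0 := by exact_mod_cast Nat.succ_ne_zero (N + 1)
  have h1 : (N : ℂ) + 1 ≠ 0 := Nat.cast_add_one_ne_zero N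
  have hN1 : (N : ℂ) + 1 + ρ ≠ 0 := fun h => hρ (N + 1) (by push_cast; linear_combination h)
  have hN3 : (N : ℂ) + 3 - ρ ≠ 0 := fun h => hρ' (N + 1) (by push_cast; linear_combination h)
  rw [eq_div_iff (by simp [*]), mul_comm]
  exact cauchyCoeff_add_two rfl rfl (mul_term01_eq_mul_term01_sub_one hρ x)
    (fun n => by linear_combination mul_term01_eq_mul_term01_sub_one hρ' (-x) n) N

lemma cauchyCoeff_term01_two_mul (hρ : ∀ k : ℕ, ρ ≠ -(k : ℂ))
    (hρ' : ∀ k : ℕ, 2 - ρ ≠ -(k : ℂ)) (M : ℕ) :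
    cauchyCoeff (term01 ρ x) (term01 (2 - ρ) (-x)) (2 * M)
      = term03 (1 / 2) ((ρ + 1) / 2) ((3 - ρ) / 2) (-x ^ 2 / 4) M := by
  induction M with
  | zero => simp [cauchyCoeff, term01, term03, poch]
  | succ M ih =>
    rw [mul_add_one, cauchyCoeff_term01_add_two x hρ hρ', ih, term03_succ]
    push_cast
    rw [show (1 / 2 + (M : ℂ)) * ((ρ + 1) / 2 + M) * ((3 - ρ) / 2 + M) * (M + 1)
      = (2 * M + 2) * (2 * M + 1) * (2 * M + 1 + ρ) * (2 * M + 3 - ρ) / 16 by ring,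
      div_div_eq_mul_div]
    ring

lemma cauchyCoeff_term01_two_mul_add_one (hρ : ∀ k : ℕ, ρ ≠ -(k : ℂ))
    (hρ' : ∀ k : ℕ, 2 - ρ ≠ -(k : ℂ)) (M : ℕ) :
    cauchyCoeff (term01 ρ x) (term01 (2 - ρ) (-x)) (2 * M + 1)
      = 2 * (1 - ρ) * x / (ρ * (2 - ρ)) * term03 (3 / 2) (ρ / 2 + 1) (2 - ρ / 2) (-x ^ 2 / 4) M := by
  induction M with
  | zero =>
    have h0 : ρ ≠ 0 := by simpa using hρ 0
    have h2 : 2 - ρ ≠ 0 := by simpa using hρ' 0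
    simp only [cauchyCoeff, sum_range_succ, range_one, sum_singleton, term01, term03, poch,
      ascPochhammer_zero, ascPochhammer_one, Polynomial.eval_one, Polynomial.eval_X, pow_zero,
      pow_one, Nat.factorial_zero, Nat.factorial_one, Nat.cast_one, Nat.cast_zero,
      Nat.reduceAdd, mul_zero, zero_add, sub_zero, sub_self, mul_one, one_mul, div_one]
    field_simp
    ring
  | succ M ih =>
    rw [show 2 * (M + 1) + 1 = 2 * M + 1 + 2 by ring, cauchyCoeff_term01_add_two x hρ hρ', ih,
      term03_succ]
    push_cast
    rw [show (3 / 2 + (M : ℂ)) * (ρ / 2 + 1 + M) * (2 - ρ / 2 + M) * (M + 1)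
      = (2 * M + 1 + 2) * (2 * M + 1 + 1) * (2 * M + 1 + 1 + ρ) * (2 * M + 1 + 3 - ρ) / 16 by ring,
      div_div_eq_mul_div]
    ring

end Bailey

theorem stmt7_general (ρ : ℂ) (hρ : ∀ k : ℕ, ρ ≠ -(k : ℂ)) (hρ' : ∀ k : ℕ, 2 - ρ ≠ -(k : ℂ))
    (x : ℂ) :
    (∑' (m : ℕ), x ^ m / (poch ρ m * m.factorial)) *
      (∑' (n : ℕ), (-x) ^ n / (poch (2 - ρ) n * n.factorial))
      = (∑' (m : ℕ), (-x ^ 2 / 4) ^ m /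
            (poch (1 / 2) m * poch ((ρ + 1) / 2) m * poch ((3 - ρ) / 2) m * m.factorial))
        + (2 * (1 - ρ) * x / (ρ * (2 - ρ))) *
          ∑' (m : ℕ), (-x ^ 2 / 4) ^ m /
            (poch (3 / 2) m * poch (ρ / 2 + 1) m * poch (2 - ρ / 2) m * m.factorial) := by
  have ha := summable_norm_term01 ρ x
  have hb := summable_norm_term01 (2 - ρ) (-x)
  have hsum := summable_cauchyCoeff ha hb
  change (∑' n : ℕ, term01 ρ x n) * (∑' n : ℕ, term01 (2 - ρ) (-x) n) = _
  rw [tsum_mul_tsum_eq_tsum_cauchyCoeff ha hb,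
    ← tsum_even_add_odd (hsum.comp_injective (mul_right_injective₀ two_ne_zero))
      (hsum.comp_injective ((add_left_injective 1).comp (mul_right_injective₀ two_ne_zero)))]
  simp only [cauchyCoeff_term01_two_mul x hρ hρ', cauchyCoeff_term01_two_mul_add_one x hρ hρ',
    tsum_mul_left]
  rfl

theorem stmt7 (ρ : ℂ) (hρ : ∀ k : ℕ, ρ ≠ -(k : ℂ)) (hρ' : ∀ k : ℕ, 2 - ρ ≠ -(k : ℂ))
    (h1 : ∀ k : ℕ, (ρ + 1) / 2 ≠ -(k : ℂ)) (h2 : ∀ k : ℕ, (3 - ρ) / 2 ≠ -(k : ℂ))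
    (h3 : ∀ k : ℕ, ρ / 2 + 1 ≠ -(k : ℂ)) (h4 : ∀ k : ℕ, 2 - ρ / 2 ≠ -(k : ℂ))
    (x : ℂ) :
    (∑' (m : ℕ), x ^ m / (poch ρ m * m.factorial)) *
      (∑' (n : ℕ), (-x) ^ n / (poch (2 - ρ) n * n.factorial))
      = (∑' (m : ℕ), (-x ^ 2 / 4) ^ m /
            (poch (1 / 2) m * poch ((ρ + 1) / 2) m * poch ((3 - ρ) / 2) m * m.factorial))
        + (2 * (1 - ρ) * x / (ρ * (2 - ρ))) *
          ∑' (m : ℕ), (-x ^ 2 / 4) ^ m /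
            (poch (3 / 2) m * poch (ρ / 2 + 1) m * poch (2 - ρ / 2) m * m.factorial) :=
  stmt7_general ρ hρ hρ' x
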